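/- arXiv:2204.03436 — 2 statements merged into one kernel-verified Lean document; each statement's English description precedes it below -/
import Mathlib

section
/- Under Assumptions A1–A7 (with AXR), for every λ ∈ Λ* the pseudo-energy identity ‖S λ‖²_{M^{-1}} + 4p = ‖λ‖²_{M^{-1}} holds, where v := Ã^{-1} T^⊤ λ and p := ⟨A v, v̄⟩ in the coercive case (α = 1) or p := Im⟨A v, v̄⟩ in the wave propagation case (α = i); moreover p ≥ 0, so the scattering operator S is non-expansive with respect to ‖·‖_{M^{-1}}: ‖S λ‖_{M^{-1}} ≤ ‖λ‖_{M^{-1}} for all λ ∈ Λ*. -/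
/-! Put `w = M⁻¹ λ` and `v = Ã⁻¹ T^⊤ λ`. Then `M⁻¹ S λ = −w + 2α T v`, and since `M` is real and
symmetric, expanding the `M⁻¹`-norm gives
`‖Sλ‖² = ‖λ‖² − 4 Re(ᾱ ⟨λ, T v̄⟩) + 4 |α|² ⟨M T v, T v̄⟩`.
Testing `Ã v = T^⊤ λ` against `v̄` gives `⟨λ, T v̄⟩ = ⟨A v, v̄⟩ + α ⟨M T v, T v̄⟩`, so for `|α| = 1`
the `M`-terms cancel and `‖Sλ‖² + 4 Re(ᾱ ⟨A v, v̄⟩) = ‖λ‖²`. For `α = 1` the correction is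
`Re ⟨A v, v̄⟩ ≥ 0`; for `α = i` it is `Im ⟨A v, v̄⟩ = ⟨A₁ v, v̄⟩ ≥ 0`. -/

/-- The transpose (dual map) `B^⊤ : Y* → X*` of a bounded linear operator `B : X → Y`. -/
noncomputable def trOp {X Y : Type*} [NormedAddCommGroup X] [NormedSpace ℂ X]
    [NormedAddCommGroup Y] [NormedSpace ℂ Y] (B : X →L[ℂ] Y) :
    (Y →L[ℂ] ℂ) →L[ℂ] (X →L[ℂ] ℂ) :=
  (ContinuousLinearMap.compL ℂ X Y ℂ).flip B

/-- `B` (an operator into the dual) is *real-valued* with respect to the conjugation `cU`: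
`⟨B v̄, w⟩ = conj ⟨B v, w̄⟩`. -/
def IsRealForm {U : Type*} [NormedAddCommGroup U] [NormedSpace ℂ U]
    (cU : U →SL[starRingEnd ℂ] U) (B : U →L[ℂ] (U →L[ℂ] ℂ)) : Prop :=
  ∀ v w, B (cU v) w = star (B v (cU w))

/-- `B` is *symmetric*: `⟨B v, w⟩ = ⟨B w, v⟩` (bilinear duality pairing). -/
def IsSymForm {U : Type*} [NormedAddCommGroup U] [NormedSpace ℂ U]
    (B : U →L[ℂ] (U →L[ℂ] ℂ)) : Prop :=
  ∀ v w, B v w = B w v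

/-- `B` is *non-negative*: `⟨B v, v̄⟩ ≥ 0` (in particular real). -/
def IsNonnegForm {U : Type*} [NormedAddCommGroup U] [NormedSpace ℂ U]
    (cU : U →SL[starRingEnd ℂ] U) (B : U →L[ℂ] (U →L[ℂ] ℂ)) : Prop :=
  ∀ v, (B v (cU v)).im = 0 ∧ 0 ≤ (B v (cU v)).re

/-- real-valued, symmetric and non-negative operator. -/
def IsRealSymNonneg {U : Type*} [NormedAddCommGroup U] [NormedSpace ℂ U]
    (cU : U →SL[starRingEnd ℂ] U) (B : U →L[ℂ] (U →L[ℂ] ℂ)) : Prop :=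
  IsRealForm cU B ∧ IsSymForm B ∧ IsNonnegForm cU B

/-- **Assumption A7**: either the coercive case (`α = 1`, `A` real, symmetric, non-negative)
or the wave propagation case (`α = i`, `A = A₀ + i A₁ − A₂` with real, symmetric,
non-negative parts). -/
def AssumptionA7 {U : Type*} [NormedAddCommGroup U] [NormedSpace ℂ U]
    (α : ℂ) (cU : U →SL[starRingEnd ℂ] U) (A : U →L[ℂ] (U →L[ℂ] ℂ)) : Prop :=
  (α = 1 ∧ IsRealSymNonneg cU A) ∨
  (α = Complex.I ∧ ∃ A0 A1 A2 : U →L[ℂ] (U →L[ℂ] ℂ),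
    A = A0 + Complex.I • A1 - A2 ∧
    IsRealSymNonneg cU A0 ∧ IsRealSymNonneg cU A1 ∧ IsRealSymNonneg cU A2)

/-- The squared `M`-norm `‖l‖²_M = ⟨M l, l̄⟩` on `Λ`. -/
noncomputable def sqM {Lam : Type*} [NormedAddCommGroup Lam] [NormedSpace ℂ Lam]
    (cL : Lam →SL[starRingEnd ℂ] Lam) (M : Lam →L[ℂ] (Lam →L[ℂ] ℂ)) (l : Lam) : ℝ :=
  (M l (cL l)).re

/-- The squared `M⁻¹`-norm `‖μ‖²_{M⁻¹} = ⟨M⁻¹ μ, μ̄⟩` on `Λ*` (here `Minv = M⁻¹`). -/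
noncomputable def sqMinv {Lam : Type*} [NormedAddCommGroup Lam] [NormedSpace ℂ Lam]
    (cL : Lam →SL[starRingEnd ℂ] Lam) (Minv : (Lam →L[ℂ] ℂ) →L[ℂ] Lam)
    (μ : Lam →L[ℂ] ℂ) : ℝ :=
  (μ (cL (Minv μ))).re

/-- The scattering operator in its simplified form (valid under A4),
`S = −I + 2α M T Ã⁻¹ T^⊤`, with `Atinv = Ã⁻¹ = (A + α T^⊤ M T)⁻¹`. -/
noncomputable def scatOp {U Lam : Type*}
    [NormedAddCommGroup U] [NormedSpace ℂ U] [NormedAddCommGroup Lam] [NormedSpace ℂ Lam]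
    (T : U →L[ℂ] Lam) (M : Lam →L[ℂ] (Lam →L[ℂ] ℂ))
    (Atinv : (U →L[ℂ] ℂ) →L[ℂ] U) (α : ℂ) :
    (Lam →L[ℂ] ℂ) →L[ℂ] (Lam →L[ℂ] ℂ) :=
  -(ContinuousLinearMap.id ℂ (Lam →L[ℂ] ℂ)) +
    (2 * α) • ((M.comp T).comp (Atinv.comp (trOp T)))

section ScatteringEnergy

variable {U Lam : Type*} [NormedAddCommGroup U] [NormedSpace ℂ U]
  [NormedAddCommGroup Lam] [NormedSpace ℂ Lam]

theorem sqMinv_neg_add_smul {cL : Lam →SL[starRingEnd ℂ] Lam} {M : Lam →L[ℂ] (Lam →L[ℂ] ℂ)}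
    (hMreal : IsRealForm cL M) (hMsym : IsSymForm M) {Minv : (Lam →L[ℂ] ℂ) →L[ℂ] Lam}
    (hMinv_l : ∀ l, Minv (M l) = l) (hMinv_r : ∀ μ, M (Minv μ) = μ)
    (lam : Lam →L[ℂ] ℂ) (c : ℂ) (u : Lam) :
    sqMinv cL Minv (-lam + c • M u) =
      sqMinv cL Minv lam - 2 * (star c * lam (cL u)).re + Complex.normSq c * sqM cL M u := by
  have hcross : M u (cL (Minv lam)) = star (lam (cL u)) := by
    conv_rhs => rw [← hMinv_r lam]
    rw [← hMreal, hMsym]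
  have hexp : (-lam + c • M u) (cL (Minv (-lam + c • M u))) =
      lam (cL (Minv lam)) - (star c * lam (cL u) + star (star c * lam (cL u)))
        + (Complex.normSq c : ℂ) * M u (cL u) := by
    simp only [map_add, map_neg, map_smul, hMinv_l, map_smulₛₗ, add_apply, neg_apply,
      smul_apply, smul_eq_mul, hcross, star_mul', star_star, Complex.normSq_eq_conj_mul_self]
    simp only [Complex.star_def]
    ring
  simp only [sqMinv, sqM, hexp, Complex.sub_re, Complex.add_re, Complex.re_ofReal_mul]
  simp only [Complex.star_def, Complex.conj_re]
  ring

theorem scatOp_apply (T : U →L[ℂ] Lam) (M : Lam →L[ℂ] (Lam →L[ℂ] ℂ))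
    (Atinv : (U →L[ℂ] ℂ) →L[ℂ] U) (α : ℂ) (lam : Lam →L[ℂ] ℂ) :
    scatOp T M Atinv α lam = -lam + (2 * α) • M (T (Atinv (trOp T lam))) :=
  rfl

theorem apply_conj_Atinv {cU : U →SL[starRingEnd ℂ] U}
    {cL : Lam →SL[starRingEnd ℂ] Lam} {T : U →L[ℂ] Lam} (hTreal : ∀ v, T (cU v) = cL (T v))
    {A : U →L[ℂ] (U →L[ℂ] ℂ)} {α : ℂ} {M : Lam →L[ℂ] (Lam →L[ℂ] ℂ)}
    {Atinv : (U →L[ℂ] ℂ) →L[ℂ] U}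
    (hAt_r : ∀ g, (A + α • ((trOp T).comp (M.comp T))) (Atinv g) = g)
    (g : U →L[ℂ] ℂ) :
    g (cU (Atinv g)) =
      A (Atinv g) (cU (Atinv g)) + α * M (T (Atinv g)) (cL (T (Atinv g))) := by
  calc g (cU (Atinv g))
      = (A + α • ((trOp T).comp (M.comp T))) (Atinv g) (cU (Atinv g)) := by rw [hAt_r]
    _ = _ := by simp [trOp, hTreal]

theorem sqMinv_scatOp_add_four_mul {cU : U →SL[starRingEnd ℂ] U}
    {cL : Lam →SL[starRingEnd ℂ] Lam} {T : U →L[ℂ] Lam} (hTreal : ∀ v, T (cU v) = cL (T v))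
    {A : U →L[ℂ] (U →L[ℂ] ℂ)} {α : ℂ} (hα : Complex.normSq α = 1)
    {M : Lam →L[ℂ] (Lam →L[ℂ] ℂ)} (hMreal : IsRealForm cL M) (hMsym : IsSymForm M)
    {Minv : (Lam →L[ℂ] ℂ) →L[ℂ] Lam}
    (hMinv_l : ∀ l, Minv (M l) = l) (hMinv_r : ∀ μ, M (Minv μ) = μ)
    {Atinv : (U →L[ℂ] ℂ) →L[ℂ] U}
    (hAt_r : ∀ g, (A + α • ((trOp T).comp (M.comp T))) (Atinv g) = g)
    (lam : Lam →L[ℂ] ℂ) :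
    sqMinv cL Minv (scatOp T M Atinv α lam)
        + 4 * (star α * A (Atinv (trOp T lam)) (cU (Atinv (trOp T lam)))).re =
      sqMinv cL Minv lam := by
  set v := Atinv (trOp T lam)
  have hbalance : lam (cL (T v)) = A v (cU v) + α * M (T v) (cL (T v)) :=
    (congrArg lam (hTreal v)).symm.trans (apply_conj_Atinv hTreal hAt_r (trOp T lam))
  have hαα : star α * α = 1 := by
    rw [Complex.star_def, ← Complex.normSq_eq_conj_mul_self, hα, Complex.ofReal_one]
  have hcross : star (2 * α) * (A v (cU v) + α * M (T v) (cL (T v))) =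
      2 * (star α * A v (cU v)) + 2 * M (T v) (cL (T v)) := by
    simp only [star_mul', star_ofNat]
    linear_combination (2 * M (T v) (cL (T v))) * hαα
  rw [scatOp_apply, sqMinv_neg_add_smul hMreal hMsym hMinv_l hMinv_r, hbalance, hcross,
    Complex.normSq_mul, hα]
  simp only [sqM, Complex.add_re]
  norm_num
  ring

theorem im_apply_conj_nonneg_of_isNonnegForm {cU : U →SL[starRingEnd ℂ] U}
    {A0 A1 A2 : U →L[ℂ] (U →L[ℂ] ℂ)}
    (h0 : IsNonnegForm cU A0) (h1 : IsNonnegForm cU A1) (h2 : IsNonnegForm cU A2) (v : U) :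
    0 ≤ ((A0 + Complex.I • A1 - A2) v (cU v)).im := by
  simp only [sub_apply, add_apply, smul_apply, smul_eq_mul, Complex.sub_im, Complex.add_im,
    Complex.mul_im, Complex.I_re, Complex.I_im, (h0 v).1, (h2 v).1]
  linarith [(h1 v).2]

end ScatteringEnergy

theorem statement11_general
    {U Lam : Type*}
    [NormedAddCommGroup U] [InnerProductSpace ℂ U]
    [NormedAddCommGroup Lam] [InnerProductSpace ℂ Lam]
    -- conjugations of the complexified spaces
    (cU : U →SL[starRingEnd ℂ] U)
    (cL : Lam →SL[starRingEnd ℂ] Lam)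
    (T : U →L[ℂ] Lam)
    -- `R`, `T` real-valued; AXR: `X` real-valued
    (hTreal : ∀ v, T (cU v) = cL (T v))
    (A : U →L[ℂ] (U →L[ℂ] ℂ))
    (α : ℂ)
    (M : Lam →L[ℂ] (Lam →L[ℂ] ℂ))
    -- Assumption A6 together with A3 (under A4): `M` real, symmetric, positively bounded
    -- below, with bounded inverse `Minv`
    (hMreal : IsRealForm cL M) (hMsym : IsSymForm M)
    (Minv : (Lam →L[ℂ] ℂ) →L[ℂ] Lam)
    (hMinv_l : ∀ l : Lam, Minv (M l) = l) (hMinv_r : ∀ μ : Lam →L[ℂ] ℂ, M (Minv μ) = μ)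
    -- Assumption A5: `Ã = A + α T^⊤ M T` has a bounded inverse
    (Atinv : (U →L[ℂ] ℂ) →L[ℂ] U)
    (hAt_r : ∀ g : U →L[ℂ] ℂ, (A + α • ((trOp T).comp (M.comp T))) (Atinv g) = g) :
    -- Assumption A7, case (i): coercive case
    ((α = 1 ∧ IsRealSymNonneg cU A) →
      ∀ lam : Lam →L[ℂ] ℂ,
        0 ≤ (A (Atinv (trOp T lam)) (cU (Atinv (trOp T lam)))).re ∧
        sqMinv cL Minv (scatOp T M Atinv α lam)
            + 4 * (A (Atinv (trOp T lam)) (cU (Atinv (trOp T lam)))).re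
          = sqMinv cL Minv lam ∧
        Real.sqrt (sqMinv cL Minv (scatOp T M Atinv α lam))
          ≤ Real.sqrt (sqMinv cL Minv lam)) ∧
    -- Assumption A7, case (ii): wave propagation case
    ((α = Complex.I ∧ ∃ A0 A1 A2 : U →L[ℂ] (U →L[ℂ] ℂ),
        A = A0 + Complex.I • A1 - A2 ∧
        IsRealSymNonneg cU A0 ∧ IsRealSymNonneg cU A1 ∧ IsRealSymNonneg cU A2) →
      ∀ lam : Lam →L[ℂ] ℂ,
        0 ≤ (A (Atinv (trOp T lam)) (cU (Atinv (trOp T lam)))).im ∧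
        sqMinv cL Minv (scatOp T M Atinv α lam)
            + 4 * (A (Atinv (trOp T lam)) (cU (Atinv (trOp T lam)))).im
          = sqMinv cL Minv lam ∧
        Real.sqrt (sqMinv cL Minv (scatOp T M Atinv α lam))
          ≤ Real.sqrt (sqMinv cL Minv lam)) := by
  refine ⟨?_, ?_⟩
  · rintro ⟨rfl, -, -, hA⟩ lam
    have hid := sqMinv_scatOp_add_four_mul hTreal (by simp) hMreal hMsym hMinv_l hMinv_r
      hAt_r lam
    rw [star_one, one_mul] at hid
    have hp := (hA (Atinv (trOp T lam))).2
    exact ⟨hp, hid, Real.sqrt_le_sqrt (by linarith)⟩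
  · rintro ⟨rfl, A0, A1, A2, rfl, ⟨-, -, h0⟩, ⟨-, -, h1⟩, ⟨-, -, h2⟩⟩ lam
    have hid := sqMinv_scatOp_add_four_mul hTreal (by simp) hMreal hMsym hMinv_l hMinv_r
      hAt_r lam
    rw [Complex.star_def, Complex.conj_I, neg_mul, Complex.neg_re, Complex.I_mul_re,
      neg_neg] at hid
    have hp := im_apply_conj_nonneg_of_isNonnegForm h0 h1 h2 (Atinv (trOp T lam))
    exact ⟨hp, hid, Real.sqrt_le_sqrt (by linarith)⟩

/-- pseudo-energy identity and non-expansiveness of the scattering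
operator: under A1–A7 (with AXR), `‖Sλ‖²_{M⁻¹} + 4p = ‖λ‖²_{M⁻¹}` with
`p = ⟨A v, v̄⟩` (coercive case) resp. `p = Im ⟨A v, v̄⟩` (wave case), `v = Ã⁻¹ T^⊤ λ`,
`p ≥ 0`, hence `‖Sλ‖_{M⁻¹} ≤ ‖λ‖_{M⁻¹}`. -/
theorem statement11
    {Uhat U Lam : Type*}
    [NormedAddCommGroup Uhat] [InnerProductSpace ℂ Uhat] [CompleteSpace Uhat]
    [NormedAddCommGroup U] [InnerProductSpace ℂ U] [CompleteSpace U]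
    [NormedAddCommGroup Lam] [InnerProductSpace ℂ Lam] [CompleteSpace Lam]
    -- conjugations of the complexified spaces
    (cUhat : Uhat →SL[starRingEnd ℂ] Uhat) (cU : U →SL[starRingEnd ℂ] U)
    (cL : Lam →SL[starRingEnd ℂ] Lam)
    (hcUhat : ∀ v, cUhat (cUhat v) = v) (hcU : ∀ v, cU (cU v) = v)
    (hcL : ∀ l, cL (cL l) = l)
    (hcUhat_iso : ∀ v, ‖cUhat v‖ = ‖v‖) (hcU_iso : ∀ v, ‖cU v‖ = ‖v‖)
    (hcL_iso : ∀ l, ‖cL l‖ = ‖l‖)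
    (R : Uhat →L[ℂ] U) (T : U →L[ℂ] Lam) (X : Lam →L[ℂ] Lam)
    -- `R`, `T` real-valued; AXR: `X` real-valued
    (hRreal : ∀ v, R (cUhat v) = cU (R v))
    (hTreal : ∀ v, T (cU v) = cL (T v))
    (hXreal : ∀ l, X (cL l) = cL (X l))
    -- Assumption A1
    (hRinj : LinearMap.ker (R : Uhat →ₗ[ℂ] U) = ⊥)
    (hRclosed : IsClosed (Set.range R))
    -- Assumption A2
    (hX2 : X.comp X = ContinuousLinearMap.id ℂ Lam)
    (hA2 : LinearMap.range (R : Uhat →ₗ[ℂ] U) = LinearMap.ker (((ContinuousLinearMap.id ℂ Lam - X).comp T : U →L[ℂ] Lam) : U →ₗ[ℂ] Lam))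
    (A : U →L[ℂ] (U →L[ℂ] ℂ))
    -- `Â = R^⊤ A R` bijective with bounded inverse
    (Ahatinv : (Uhat →L[ℂ] ℂ) →L[ℂ] Uhat)
    (hAhat_left : ∀ uhat : Uhat, Ahatinv (trOp R (A (R uhat))) = uhat)
    (hAhat_right : ∀ g : Uhat →L[ℂ] ℂ, trOp R (A (R (Ahatinv g))) = g)
    (α : ℂ) (hα : α ≠ 0)
    (M : Lam →L[ℂ] (Lam →L[ℂ] ℂ))
    -- Assumption A4
    (hA4 : (trOp X).comp (M.comp X) = M)
    -- Assumption A6 together with A3 (under A4): `M` real, symmetric, positively bounded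
    -- below, with bounded inverse `Minv`
    (hMreal : IsRealForm cL M) (hMsym : IsSymForm M)
    (cM : ℝ) (hcM : 0 < cM)
    (hMlow : ∀ l : Lam, (M l (cL l)).im = 0 ∧ cM * ‖l‖ ^ 2 ≤ (M l (cL l)).re)
    (Minv : (Lam →L[ℂ] ℂ) →L[ℂ] Lam)
    (hMinv_l : ∀ l : Lam, Minv (M l) = l) (hMinv_r : ∀ μ : Lam →L[ℂ] ℂ, M (Minv μ) = μ)
    -- Assumption A5: `Ã = A + α T^⊤ M T` has a bounded inverse
    (Atinv : (U →L[ℂ] ℂ) →L[ℂ] U)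
    (hAt_l : ∀ u : U, Atinv ((A + α • ((trOp T).comp (M.comp T))) u) = u)
    (hAt_r : ∀ g : U →L[ℂ] ℂ, (A + α • ((trOp T).comp (M.comp T))) (Atinv g) = g) :
    -- Assumption A7, case (i): coercive case
    ((α = 1 ∧ IsRealSymNonneg cU A) →
      ∀ lam : Lam →L[ℂ] ℂ,
        0 ≤ (A (Atinv (trOp T lam)) (cU (Atinv (trOp T lam)))).re ∧
        sqMinv cL Minv (scatOp T M Atinv α lam)
            + 4 * (A (Atinv (trOp T lam)) (cU (Atinv (trOp T lam)))).re
          = sqMinv cL Minv lam ∧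
        Real.sqrt (sqMinv cL Minv (scatOp T M Atinv α lam))
          ≤ Real.sqrt (sqMinv cL Minv lam)) ∧
    -- Assumption A7, case (ii): wave propagation case
    ((α = Complex.I ∧ ∃ A0 A1 A2 : U →L[ℂ] (U →L[ℂ] ℂ),
        A = A0 + Complex.I • A1 - A2 ∧
        IsRealSymNonneg cU A0 ∧ IsRealSymNonneg cU A1 ∧ IsRealSymNonneg cU A2) →
      ∀ lam : Lam →L[ℂ] ℂ,
        0 ≤ (A (Atinv (trOp T lam)) (cU (Atinv (trOp T lam)))).im ∧
        sqMinv cL Minv (scatOp T M Atinv α lam)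
            + 4 * (A (Atinv (trOp T lam)) (cU (Atinv (trOp T lam)))).im
          = sqMinv cL Minv lam ∧
        Real.sqrt (sqMinv cL Minv (scatOp T M Atinv α lam))
          ≤ Real.sqrt (sqMinv cL Minv lam)) :=
  statement11_general cU cL T hTreal A α M hMreal hMsym Minv hMinv_l hMinv_r Atinv hAt_r
end

section
/- Under Assumptions A1–A3, A5, A6 and range(T) = Λ, there exists a constant γ > 0 such that ‖(I − X^⊤ S) λ‖_{M^{-1}} ≥ γ ‖λ‖_{M^{-1}} for all λ ∈ Λ*. If additionally Assumptions A4, AXR and A7 hold, then with the same constant γ the coercivity estimate Re ⟨M^{-1} (I − X^⊤ S) λ, λ̄⟩ ≥ (γ²/2) ‖λ‖²_{M^{-1}} holds for all λ ∈ Λ*. -/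
/-- The scattering operator in its full form `S = −I + α (M + X^⊤ M X) T Ã⁻¹ T^⊤`. -/
noncomputable def scatOpFull {U Lam : Type*}
    [NormedAddCommGroup U] [NormedSpace ℂ U] [NormedAddCommGroup Lam] [NormedSpace ℂ Lam]
    (T : U →L[ℂ] Lam) (X : Lam →L[ℂ] Lam) (M : Lam →L[ℂ] (Lam →L[ℂ] ℂ))
    (Atinv : (U →L[ℂ] ℂ) →L[ℂ] U) (α : ℂ) :
    (Lam →L[ℂ] ℂ) →L[ℂ] (Lam →L[ℂ] ℂ) :=
  -(ContinuousLinearMap.id ℂ (Lam →L[ℂ] ℂ)) +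
    α • (((M + (trOp X).comp (M.comp X)).comp T).comp (Atinv.comp (trOp T)))

/-!
`I − X^⊤ S` is a bounded bijection of `Λ*`. Both its injectivity and an explicit preimage come
from splitting a functional as `α M T u` plus a remainder that is odd under `X^⊤`; an odd
functional vanishes on the fixed points of `X`, hence on `T (range R)`, where `Â` is invertible.
The open mapping theorem bounds it below, and `‖·‖_{M⁻¹}` is equivalent to the dual norm.
For the coercivity, A4 and AXR make `X^⊤` an `M⁻¹`-isometry and A7 makes `S` an
`M⁻¹`-contraction, so with `G = X^⊤ S λ` the polarization identity
`2 Re ⟨M⁻¹(λ − G), λ̄⟩ = ‖λ‖² − ‖G‖² + ‖λ − G‖²` is at least `‖λ − G‖² ≥ γ² ‖λ‖²`.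
-/

@[simp] lemma trOp_apply {X Y : Type*} [NormedAddCommGroup X] [NormedSpace ℂ X]
    [NormedAddCommGroup Y] [NormedSpace ℂ Y] (B : X →L[ℂ] Y) (μ : Y →L[ℂ] ℂ) (x : X) :
    trOp B μ x = μ (B x) := rfl

section Transpose

variable {U Lam : Type*} [NormedAddCommGroup U] [NormedSpace ℂ U]
  [NormedAddCommGroup Lam] [NormedSpace ℂ Lam]

lemma trOp_injective {T : U →L[ℂ] Lam} (hT : Function.Surjective T) :
    Function.Injective (trOp T) := by
  intro μ ν h
  ext l
  obtain ⟨u, rfl⟩ := hT l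
  exact DFunLike.congr_fun h u

/-- The open mapping theorem makes the factorisation of `θ` through `T` bounded. -/
lemma exists_trOp_eq_of_surjective [CompleteSpace U] [CompleteSpace Lam] {T : U →L[ℂ] Lam}
    (hT : Function.Surjective T) {θ : U →L[ℂ] ℂ} (hθ : ∀ u, T u = 0 → θ u = 0) :
    ∃ μ : Lam →L[ℂ] ℂ, trOp T μ = θ := by
  obtain ⟨C, -, hpre⟩ := T.exists_preimage_norm_le hT
  have hker : LinearMap.ker (T : U →ₗ[ℂ] Lam) ≤ LinearMap.ker (θ : U →ₗ[ℂ] ℂ) :=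
    fun u hu => hθ u hu
  let μ₀ : Lam →ₗ[ℂ] ℂ := (LinearMap.ker (T : U →ₗ[ℂ] Lam)).liftQ θ hker ∘ₗ
    ((T : U →ₗ[ℂ] Lam).quotKerEquivOfSurjective hT).symm.toLinearMap
  have hμ₀ : ∀ u, μ₀ (T u) = θ u := fun u => by
    change (LinearMap.ker (T : U →ₗ[ℂ] Lam)).liftQ (θ : U →ₗ[ℂ] ℂ) hker
      (((T : U →ₗ[ℂ] Lam).quotKerEquivOfSurjective hT).symm ((T : U →ₗ[ℂ] Lam) u)) = θ u
    rw [LinearMap.quotKerEquivOfSurjective_symm_apply, Submodule.liftQ_apply]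
    rfl
  refine ⟨μ₀.mkContinuous (‖θ‖ * C) fun l => ?_, ?_⟩
  · obtain ⟨u, rfl, hu⟩ := hpre l
    rw [hμ₀, mul_assoc]
    exact θ.le_opNorm_of_le hu
  · ext u
    exact hμ₀ u

end Transpose

section Interface

variable {Uhat U Lam : Type*} [NormedAddCommGroup Uhat] [NormedSpace ℂ Uhat]
  [NormedAddCommGroup U] [NormedSpace ℂ U] [NormedAddCommGroup Lam] [NormedSpace ℂ Lam]
  {R : Uhat →L[ℂ] U} {T : U →L[ℂ] Lam} {X : Lam →L[ℂ] Lam} {A : U →L[ℂ] (U →L[ℂ] ℂ)}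
  {M : Lam →L[ℂ] (Lam →L[ℂ] ℂ)} {Atinv : (U →L[ℂ] ℂ) →L[ℂ] U} {α : ℂ}

lemma exists_apply_eq_iff_of_range_eq_ker
    (hA2 : LinearMap.range (R : Uhat →ₗ[ℂ] U) =
      LinearMap.ker ((ContinuousLinearMap.id ℂ Lam - X).comp T : U →ₗ[ℂ] Lam)) (u : U) :
    (∃ w, R w = u) ↔ X (T u) = T u := by
  have h := SetLike.ext_iff.mp hA2 u
  simp only [LinearMap.mem_range, LinearMap.mem_ker, ContinuousLinearMap.coe_coe,
    ContinuousLinearMap.comp_apply, sub_apply, ContinuousLinearMap.id_apply, sub_eq_zero] at h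
  rw [h, eq_comm]

lemma apply_eq_neg_of_forall_apply_fixed_eq_zero (hX : Function.Involutive X)
    {ν : Lam →L[ℂ] ℂ} (hν : ∀ l, X l = l → ν l = 0) (l : Lam) : ν (X l) = -ν l := by
  have h := hν (l + X l) (by rw [map_add, hX l, add_comm])
  rw [map_add] at h
  linear_combination h

lemma add_trOp_comp_apply_apply_of_involutive (hX : Function.Involutive X) (m l : Lam) :
    (M + (trOp X).comp (M.comp X)) (X m) l = (M + (trOp X).comp (M.comp X)) m (X l) := by
  simp only [add_apply, ContinuousLinearMap.comp_apply, trOp_apply, hX m, hX l]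
  ring

lemma add_trOp_comp_apply_apply_of_apply_eq {m : Lam} (hm : X m = m) (l : Lam) :
    (M + (trOp X).comp (M.comp X)) m l = M m l + M m (X l) := by
  simp only [add_apply, ContinuousLinearMap.comp_apply, trOp_apply, hm]

variable (T X M Atinv α) in
noncomputable def interfaceOp : (Lam →L[ℂ] ℂ) →L[ℂ] (Lam →L[ℂ] ℂ) :=
  ContinuousLinearMap.id ℂ _ - (trOp X).comp (scatOpFull T X M Atinv α)

lemma interfaceOp_apply (lam : Lam →L[ℂ] ℂ) :
    interfaceOp T X M Atinv α lam = lam - trOp X (scatOpFull T X M Atinv α lam) := rfl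

lemma interfaceOp_apply_apply (lam : Lam →L[ℂ] ℂ) (l : Lam) :
    interfaceOp T X M Atinv α lam l = lam l + lam (X l) -
      α * (M + (trOp X).comp (M.comp X)) (T (Atinv (trOp T lam))) (X l) := by
  simp only [interfaceOp, scatOpFull, sub_apply, add_apply, ContinuousLinearMap.comp_apply,
    smul_apply, neg_apply, ContinuousLinearMap.id_apply, trOp_apply, smul_eq_mul, map_add,
    map_neg, map_smul]
  ring

lemma interfaceOp_injective (hX : Function.Involutive X)
    (hRX : ∀ u, (∃ w, R w = u) ↔ X (T u) = T u) (hT : Function.Surjective T) (hα : α ≠ 0)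
    (hN : Function.Injective (M + (trOp X).comp (M.comp X)))
    (hAhat : ∀ w, trOp R (A (R w)) = 0 → w = 0)
    (hAt : ∀ g, (A + α • (trOp T).comp (M.comp T)) (Atinv g) = g) :
    Function.Injective (interfaceOp T X M Atinv α) := by
  refine (injective_iff_map_eq_zero _).mpr fun lam hlam => ?_
  set u := Atinv (trOp T lam)
  have hsum : ∀ l, lam l + lam (X l) = α * (M + (trOp X).comp (M.comp X)) (T u) (X l) :=
    fun l => by
      have h := DFunLike.congr_fun hlam l
      rw [interfaceOp_apply_apply, zero_apply] at h
      linear_combination h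
  have hfix : X (T u) = T u := hN <| by
    ext l
    have h := hsum (X l)
    rw [hX l, add_comm, hsum l] at h
    rw [add_trOp_comp_apply_apply_of_involutive hX, mul_left_cancel₀ hα h]
  obtain ⟨w, hw⟩ := (hRX u).mpr hfix
  have hTlam : ∀ v, lam (T v) = A u v + α * M (T u) (T v) := fun v => by
    simpa using (DFunLike.congr_fun (hAt (trOp T lam)) v).symm
  have hν : ∀ l, X l = l → (lam - α • M (T u)) l = 0 := fun l hl => by
    have h := hsum l
    rw [add_trOp_comp_apply_apply_of_apply_eq hfix] at h
    simp only [hl] at h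
    have h2 : (2 : ℂ) * (lam l - α * M (T u) l) = 0 := by linear_combination h
    simpa using h2
  have hw0 : w = 0 := hAhat w <| by
    ext w'
    have h := hν (T (R w')) ((hRX _).mp ⟨w', rfl⟩)
    simp only [sub_apply, smul_apply, smul_eq_mul, hTlam] at h
    simpa [hw] using h
  have hu : u = 0 := by rw [← hw, hw0, map_zero]
  apply trOp_injective hT
  rw [map_zero, ← hAt (trOp T lam)]
  change (A + α • (trOp T).comp (M.comp T)) u = 0
  rw [hu, map_zero]

lemma interfaceOp_surjective [CompleteSpace U] [CompleteSpace Lam] (hX : Function.Involutive X)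
    (hRX : ∀ u, (∃ w, R w = u) ↔ X (T u) = T u) (hT : Function.Surjective T) (hα : α ≠ 0)
    (hN : Function.Surjective (M + (trOp X).comp (M.comp X)))
    (hAhat : ∀ g, ∃ w, trOp R (A (R w)) = g)
    (hAt : ∀ u, Atinv ((A + α • (trOp T).comp (M.comp T)) u) = u) :
    Function.Surjective (interfaceOp T X M Atinv α) := by
  intro g
  obtain ⟨m, hm⟩ := hN (α⁻¹ • g)
  obtain ⟨u, rfl⟩ := hT m
  have hαN : ∀ l, α * (M + (trOp X).comp (M.comp X)) (T u) l = g l := fun l => by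
    rw [hm, smul_apply, smul_eq_mul, ← mul_assoc, mul_inv_cancel₀ hα, one_mul]
  set At := A + α • (trOp T).comp (M.comp T)
  obtain ⟨w, hw⟩ := hAhat (trOp R (trOp T g - At u))
  -- `θ` is the defect of `R w + u` in `Ã (R w + u) = T^⊤ g`; the choice of `w` kills it
  -- on `range R`.
  set θ : U →L[ℂ] ℂ := A (R w) + At u - trOp T g
  have hθR : ∀ w', θ (R w') = 0 := fun w' => by
    have h := DFunLike.congr_fun hw w'
    simp only [trOp_apply, sub_apply] at h
    simp only [θ, add_apply, sub_apply, trOp_apply, h]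
    ring
  obtain ⟨μ, hμ⟩ := exists_trOp_eq_of_surjective hT fun v hv => by
    obtain ⟨w', rfl⟩ := (hRX v).mpr (by rw [hv, map_zero])
    exact hθR w'
  have hμX : ∀ l, μ (X l) = -μ l := apply_eq_neg_of_forall_apply_fixed_eq_zero hX fun l hl => by
    obtain ⟨v, rfl⟩ := hT l
    obtain ⟨w', rfl⟩ := (hRX v).mpr hl
    rw [← trOp_apply, hμ, hθR]
  set ρ := μ + g + α • M (T (R w))
  have hρ : Atinv (trOp T ρ) = R w + u := by
    rw [← hAt (R w + u)]
    congr 1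
    ext v
    have h := DFunLike.congr_fun hμ v
    simp only [θ, At, ρ, trOp_apply, add_apply, sub_apply, smul_apply, smul_eq_mul,
      map_add, ContinuousLinearMap.comp_apply] at h ⊢
    rw [h]
    ring
  refine ⟨ρ, ?_⟩
  ext l
  have hfix : X (T (R w)) = T (R w) := (hRX _).mp ⟨w, rfl⟩
  have hNρ : α * (M + (trOp X).comp (M.comp X)) (T (R w) + T u) (X l) =
      α * (M (T (R w)) (X l) + M (T (R w)) l) + g (X l) := by
    rw [map_add, add_apply, mul_add, hαN, add_trOp_comp_apply_apply_of_apply_eq hfix, hX l]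
  rw [interfaceOp_apply_apply, hρ, map_add, hNρ]
  simp only [ρ, add_apply, smul_apply, smul_eq_mul, hμX]
  ring

end Interface

lemma ContinuousLinearMap.exists_norm_le_mul_norm_apply {𝕜 E F : Type*}
    [NontriviallyNormedField 𝕜] [NormedAddCommGroup E] [NormedSpace 𝕜 E] [CompleteSpace E]
    [NormedAddCommGroup F] [NormedSpace 𝕜 F] [CompleteSpace F] {f : E →L[𝕜] F}
    (hinj : Function.Injective f) (hsurj : Function.Surjective f) :
    ∃ C, ∀ x, ‖x‖ ≤ C * ‖f x‖ := by
  obtain ⟨C, -, hpre⟩ := f.exists_preimage_norm_le hsurj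
  refine ⟨C, fun x => ?_⟩
  obtain ⟨y, hy, hyC⟩ := hpre (f x)
  rwa [hinj hy] at hyC

lemma exists_pos_sq_mul_le_of_norm_le {E : Type*} [SeminormedAddCommGroup E] (q : E → ℝ)
    (F : E → E) {a b c C : ℝ} (ha : 0 ≤ a) (hb : 0 ≤ b) (hc : 0 < c) (hq : ∀ x, 0 ≤ q x)
    (hqa : ∀ x, q x ≤ a * ‖x‖ ^ 2) (hqb : ∀ x, c * ‖x‖ ^ 2 ≤ b * q x)
    (hF : ∀ x, ‖x‖ ≤ C * ‖F x‖) :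
    ∃ γ : ℝ, 0 < γ ∧ ∀ x, γ ^ 2 * q x ≤ q (F x) := by
  set K := a * C ^ 2 * b + c
  have hK : 0 < K := by positivity
  refine ⟨Real.sqrt (c / K), by positivity, fun x => ?_⟩
  rw [Real.sq_sqrt (by positivity), div_mul_eq_mul_div, div_le_iff₀ hK]
  have hx : ‖x‖ ^ 2 ≤ C ^ 2 * ‖F x‖ ^ 2 := by
    rw [← mul_pow]
    exact pow_le_pow_left₀ (norm_nonneg x) (hF x) 2
  calc c * q x ≤ c * (a * ‖x‖ ^ 2) := mul_le_mul_of_nonneg_left (hqa x) hc.le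
    _ ≤ c * (a * (C ^ 2 * ‖F x‖ ^ 2)) := by gcongr
    _ = a * C ^ 2 * (c * ‖F x‖ ^ 2) := by ring
    _ ≤ a * C ^ 2 * (b * q (F x)) := mul_le_mul_of_nonneg_left (hqb (F x)) (by positivity)
    _ ≤ q (F x) * K := by nlinarith [hq (F x)]

section SqMinv

variable {Lam : Type*} [NormedAddCommGroup Lam] [NormedSpace ℂ Lam]
  {cL : Lam →SL[starRingEnd ℂ] Lam} {M : Lam →L[ℂ] (Lam →L[ℂ] ℂ)}
  {Minv : (Lam →L[ℂ] ℂ) →L[ℂ] Lam}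

lemma sqMinv_le (μ : Lam →L[ℂ] ℂ) : sqMinv cL Minv μ ≤ ‖cL‖ * ‖Minv‖ * ‖μ‖ ^ 2 :=
  calc sqMinv cL Minv μ ≤ ‖μ (cL (Minv μ))‖ := Complex.re_le_norm _
    _ ≤ ‖μ‖ * (‖cL‖ * (‖Minv‖ * ‖μ‖)) :=
      μ.le_opNorm_of_le (cL.le_opNorm_of_le (Minv.le_opNorm μ))
    _ = ‖cL‖ * ‖Minv‖ * ‖μ‖ ^ 2 := by ring

lemma mul_sq_norm_Minv_le_sqMinv {cM : ℝ} (hM : ∀ l, cM * ‖l‖ ^ 2 ≤ (M l (cL l)).re)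
    (hMinv : ∀ μ, M (Minv μ) = μ) (μ : Lam →L[ℂ] ℂ) :
    cM * ‖Minv μ‖ ^ 2 ≤ sqMinv cL Minv μ := by
  have h := hM (Minv μ)
  rwa [hMinv] at h

lemma sqMinv_nonneg {cM : ℝ} (hcM : 0 ≤ cM) (hM : ∀ l, cM * ‖l‖ ^ 2 ≤ (M l (cL l)).re)
    (hMinv : ∀ μ, M (Minv μ) = μ) (μ : Lam →L[ℂ] ℂ) : 0 ≤ sqMinv cL Minv μ :=
  (mul_nonneg hcM (sq_nonneg _)).trans (mul_sq_norm_Minv_le_sqMinv hM hMinv μ)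

lemma mul_sq_norm_le_sqMinv {cM : ℝ} (hcM : 0 ≤ cM) (hM : ∀ l, cM * ‖l‖ ^ 2 ≤ (M l (cL l)).re)
    (hMinv : ∀ μ, M (Minv μ) = μ) (μ : Lam →L[ℂ] ℂ) :
    cM * ‖μ‖ ^ 2 ≤ ‖M‖ ^ 2 * sqMinv cL Minv μ := by
  have hμ : ‖μ‖ ^ 2 ≤ ‖M‖ ^ 2 * ‖Minv μ‖ ^ 2 := by
    rw [← mul_pow]
    exact pow_le_pow_left₀ (norm_nonneg μ) (by simpa [hMinv] using M.le_opNorm (Minv μ)) 2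
  calc cM * ‖μ‖ ^ 2 ≤ ‖M‖ ^ 2 * (cM * ‖Minv μ‖ ^ 2) := by nlinarith
    _ ≤ ‖M‖ ^ 2 * sqMinv cL Minv μ := by gcongr; exact mul_sq_norm_Minv_le_sqMinv hM hMinv μ

end SqMinv

lemma AssumptionA7.re_star_mul_nonneg {U : Type*} [NormedAddCommGroup U] [NormedSpace ℂ U]
    {α : ℂ} {cU : U →SL[starRingEnd ℂ] U} {A : U →L[ℂ] (U →L[ℂ] ℂ)}
    (h : AssumptionA7 α cU A) (u : U) : 0 ≤ (star α * A u (cU u)).re := by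
  rcases h with ⟨rfl, -, -, hA⟩ | ⟨rfl, A0, A1, A2, rfl, ⟨-, -, hA0⟩, ⟨-, -, hA1⟩, ⟨-, -, hA2⟩⟩
  · simpa using (hA u).2
  · simp only [sub_apply, add_apply, smul_apply, smul_eq_mul, Complex.star_def,
      Complex.conj_I, Complex.mul_re, Complex.neg_re, Complex.neg_im, Complex.I_re,
      Complex.I_im, Complex.sub_im, Complex.add_im, Complex.mul_im, Complex.sub_re,
      Complex.add_re]
    linarith [(hA0 u).1, (hA1 u).2, (hA2 u).1]

section SqMinvIdentities

variable {U Lam : Type*} [NormedAddCommGroup U] [NormedSpace ℂ U]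
  [NormedAddCommGroup Lam] [NormedSpace ℂ Lam]
  {cU : U →SL[starRingEnd ℂ] U} {cL : Lam →SL[starRingEnd ℂ] Lam}
  {M : Lam →L[ℂ] (Lam →L[ℂ] ℂ)} {Minv : (Lam →L[ℂ] ℂ) →L[ℂ] Lam}

lemma apply_conj_Minv_comm (hMreal : IsRealForm cL M) (hMsym : IsSymForm M)
    (hMinv : ∀ μ, M (Minv μ) = μ) (μ ν : Lam →L[ℂ] ℂ) :
    ν (cL (Minv μ)) = star (μ (cL (Minv ν))) := by
  conv_lhs => rw [← hMinv ν]
  conv_rhs => rw [← hMinv μ]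
  rw [hMsym, hMreal]

lemma two_mul_re_apply_conj_Minv_sub (hMreal : IsRealForm cL M) (hMsym : IsSymForm M)
    (hMinv : ∀ μ, M (Minv μ) = μ) (μ ν : Lam →L[ℂ] ℂ) :
    2 * (μ (cL (Minv (μ - ν)))).re =
      sqMinv cL Minv μ - sqMinv cL Minv ν + sqMinv cL Minv (μ - ν) := by
  simp only [sqMinv, map_sub, sub_apply, Complex.sub_re,
    apply_conj_Minv_comm hMreal hMsym hMinv μ ν, Complex.star_def, Complex.conj_re]
  ring

lemma sqMinv_trOp {X : Lam →L[ℂ] Lam} (hX : Function.Involutive X)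
    (hXR : ∀ l, X (cL l) = cL (X l)) (hA4 : (trOp X).comp (M.comp X) = M)
    (hMinv_l : ∀ l, Minv (M l) = l) (hMinv_r : ∀ μ, M (Minv μ) = μ) (μ : Lam →L[ℂ] ℂ) :
    sqMinv cL Minv (trOp X μ) = sqMinv cL Minv μ := by
  have h : Minv (trOp X μ) = X (Minv μ) := by
    have h4 := DFunLike.congr_fun hA4 (X (Minv μ))
    simp only [ContinuousLinearMap.comp_apply, hX (Minv μ), hMinv_r] at h4
    rw [h4, hMinv_l]
  simp only [sqMinv, h, trOp_apply, hXR, hX (Minv μ)]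

lemma sqMinv_scatOpFull {T : U →L[ℂ] Lam} {X : Lam →L[ℂ] Lam} {A : U →L[ℂ] (U →L[ℂ] ℂ)}
    {Atinv : (U →L[ℂ] ℂ) →L[ℂ] U} {α : ℂ} (hA4 : (trOp X).comp (M.comp X) = M)
    (hTreal : ∀ v, T (cU v) = cL (T v))
    (hAt : ∀ g, (A + α • (trOp T).comp (M.comp T)) (Atinv g) = g)
    (hMreal : IsRealForm cL M) (hMsym : IsSymForm M)
    (hMinv_l : ∀ l, Minv (M l) = l) (hMinv_r : ∀ μ, M (Minv μ) = μ) (μ : Lam →L[ℂ] ℂ) :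
    sqMinv cL Minv (scatOpFull T X M Atinv α μ) = sqMinv cL Minv μ -
      4 * (star α * A (Atinv (trOp T μ)) (cU (Atinv (trOp T μ)))).re := by
  set u := Atinv (trOp T μ)
  have hS : scatOpFull T X M Atinv α μ = -μ + (2 * α) • M (T u) := by
    simp only [scatOpFull, hA4, add_apply, neg_apply, ContinuousLinearMap.id_apply, smul_apply,
      ContinuousLinearMap.comp_apply]
    rw [← two_smul ℂ (M (T u)), smul_smul, mul_comm]
  -- `μ (cL (T u)) = ⟨Ã u, ū⟩` contains `α ⟨M T u, T ū⟩`, which cancels the quadratic term.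
  have hz : μ (cL (T u)) = A u (cU u) + α * M (T u) (cL (T u)) := by
    rw [← hTreal]
    simpa using (DFunLike.congr_fun (hAt (trOp T μ)) (cU u)).symm
  have hMμ : M (T u) (cL (Minv μ)) = star (μ (cL (T u))) := by
    simpa [hMinv_l] using apply_conj_Minv_comm hMreal hMsym hMinv_r μ (M (T u))
  simp only [sqMinv, hS, map_add, map_neg, map_smul, hMinv_l, map_smulₛₗ, add_apply, neg_apply,
    smul_apply, smul_eq_mul, hMμ, hz, Complex.star_def]
  simp only [Complex.add_re, Complex.neg_re, Complex.mul_re, Complex.conj_re, Complex.conj_im,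
    Complex.add_im, Complex.neg_im, Complex.mul_im, map_mul, Complex.re_ofNat, Complex.im_ofNat]
  ring

end SqMinvIdentities

theorem statement16_general
    {Uhat U Lam : Type*}
    [NormedAddCommGroup Uhat] [InnerProductSpace ℂ Uhat]
    [NormedAddCommGroup U] [InnerProductSpace ℂ U] [CompleteSpace U]
    [NormedAddCommGroup Lam] [InnerProductSpace ℂ Lam] [CompleteSpace Lam]
    (cU : U →SL[starRingEnd ℂ] U)
    (cL : Lam →SL[starRingEnd ℂ] Lam)
    (R : Uhat →L[ℂ] U) (T : U →L[ℂ] Lam) (X : Lam →L[ℂ] Lam)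
    (hTreal : ∀ v, T (cU v) = cL (T v))
    -- Assumption A2
    (hX2 : X.comp X = ContinuousLinearMap.id ℂ Lam)
    (hA2 : LinearMap.range (R : Uhat →ₗ[ℂ] U) = LinearMap.ker ((ContinuousLinearMap.id ℂ Lam - X).comp T : U →ₗ[ℂ] Lam))
    (A : U →L[ℂ] (U →L[ℂ] ℂ))
    -- `Â = R^⊤ A R` bijective with bounded inverse
    (Ahatinv : (Uhat →L[ℂ] ℂ) →L[ℂ] Uhat)
    (hAhat_left : ∀ uhat : Uhat, Ahatinv (trOp R (A (R uhat))) = uhat)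
    (hAhat_right : ∀ g : Uhat →L[ℂ] ℂ, trOp R (A (R (Ahatinv g))) = g)
    (α : ℂ) (hα : α ≠ 0)
    (M : Lam →L[ℂ] (Lam →L[ℂ] ℂ))
    -- Assumption A3: `M + X^⊤ M X` has a bounded inverse
    (Ninv : (Lam →L[ℂ] ℂ) →L[ℂ] Lam)
    (hNl : ∀ l : Lam, Ninv ((M + (trOp X).comp (M.comp X)) l) = l)
    (hNr : ∀ μ : Lam →L[ℂ] ℂ, (M + (trOp X).comp (M.comp X)) (Ninv μ) = μ)
    -- Assumption A5: `Ã = A + α T^⊤ M T` has a bounded inverse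
    (Atinv : (U →L[ℂ] ℂ) →L[ℂ] U)
    (hAt_l : ∀ u : U, Atinv ((A + α • ((trOp T).comp (M.comp T))) u) = u)
    (hAt_r : ∀ g : U →L[ℂ] ℂ, (A + α • ((trOp T).comp (M.comp T))) (Atinv g) = g)
    -- Assumption A6: `M` real, symmetric, positively bounded below, with inverse `Minv`
    (hMreal : IsRealForm cL M) (hMsym : IsSymForm M)
    (cM : ℝ) (hcM : 0 < cM)
    (hMlow : ∀ l : Lam, (M l (cL l)).im = 0 ∧ cM * ‖l‖ ^ 2 ≤ (M l (cL l)).re)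
    (Minv : (Lam →L[ℂ] ℂ) →L[ℂ] Lam)
    (hMinv_l : ∀ l : Lam, Minv (M l) = l) (hMinv_r : ∀ μ : Lam →L[ℂ] ℂ, M (Minv μ) = μ)
    -- surjectivity of the trace operator
    (hTsurj : LinearMap.range (T : U →ₗ[ℂ] Lam) = ⊤) :
    ∃ γ : ℝ, 0 < γ ∧
      (∀ lam : Lam →L[ℂ] ℂ,
        γ * Real.sqrt (sqMinv cL Minv lam) ≤
          Real.sqrt (sqMinv cL Minv (lam - trOp X (scatOpFull T X M Atinv α lam)))) ∧
      -- under A4, AXR and A7 the coercivity estimate holds with the same `γ`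
      (((trOp X).comp (M.comp X) = M ∧ (∀ l, X (cL l) = cL (X l)) ∧ AssumptionA7 α cU A) →
        ∀ lam : Lam →L[ℂ] ℂ,
          γ ^ 2 / 2 * sqMinv cL Minv lam ≤
            (lam (cL (Minv (lam - trOp X (scatOpFull T X M Atinv α lam))))).re) := by
  have hX : Function.Involutive X := fun l => DFunLike.congr_fun hX2 l
  have hT : Function.Surjective T := LinearMap.range_eq_top.mp hTsurj
  have hRX := exists_apply_eq_iff_of_range_eq_ker hA2
  have hM : ∀ l, cM * ‖l‖ ^ 2 ≤ (M l (cL l)).re := fun l => (hMlow l).2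
  have hinj := interfaceOp_injective hX hRX hT hα (Function.LeftInverse.injective hNl)
    (fun w hw => by rw [← hAhat_left w, hw, map_zero]) hAt_r
  have hsurj := interfaceOp_surjective hX hRX hT hα (fun μ => ⟨_, hNr μ⟩)
    (fun g => ⟨_, hAhat_right g⟩) hAt_l
  obtain ⟨C, hC⟩ := ContinuousLinearMap.exists_norm_le_mul_norm_apply hinj hsurj
  obtain ⟨γ, hγ, hγF⟩ := exists_pos_sq_mul_le_of_norm_le (sqMinv cL Minv) _ (by positivity)
    (sq_nonneg ‖M‖) hcM (sqMinv_nonneg hcM.le hM hMinv_r) sqMinv_le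
    (mul_sq_norm_le_sqMinv hcM.le hM hMinv_r) hC
  refine ⟨γ, hγ, fun lam => ?_, fun ⟨hA4, hXR, hA7⟩ lam => ?_⟩
  · rw [← interfaceOp_apply, ← Real.sqrt_sq hγ.le, ← Real.sqrt_mul (sq_nonneg γ)]
    exact Real.sqrt_le_sqrt (hγF lam)
  · have hcontr : sqMinv cL Minv (trOp X (scatOpFull T X M Atinv α lam)) ≤ sqMinv cL Minv lam := by
      rw [sqMinv_trOp hX hXR hA4 hMinv_l hMinv_r,
        sqMinv_scatOpFull hA4 hTreal hAt_r hMreal hMsym hMinv_l hMinv_r]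
      linarith [hA7.re_star_mul_nonneg (Atinv (trOp T lam))]
    have hpolar := two_mul_re_apply_conj_Minv_sub hMreal hMsym hMinv_r lam
      (trOp X (scatOpFull T X M Atinv α lam))
    have hlow := hγF lam
    rw [interfaceOp_apply] at hlow
    linarith

/-- under A1–A3, A5, A6 and `range(T) = Λ` there is `γ > 0` with
`‖(I − X^⊤S)λ‖_{M⁻¹} ≥ γ ‖λ‖_{M⁻¹}`; under A4, AXR and A7 additionally
`Re ⟨M⁻¹(I − X^⊤S)λ, λ̄⟩ ≥ (γ²/2)‖λ‖²_{M⁻¹}` with the same `γ`. -/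
theorem statement16
    {Uhat U Lam : Type*}
    [NormedAddCommGroup Uhat] [InnerProductSpace ℂ Uhat] [CompleteSpace Uhat]
    [NormedAddCommGroup U] [InnerProductSpace ℂ U] [CompleteSpace U]
    [NormedAddCommGroup Lam] [InnerProductSpace ℂ Lam] [CompleteSpace Lam]
    (cUhat : Uhat →SL[starRingEnd ℂ] Uhat) (cU : U →SL[starRingEnd ℂ] U)
    (cL : Lam →SL[starRingEnd ℂ] Lam)
    (hcUhat : ∀ v, cUhat (cUhat v) = v) (hcU : ∀ v, cU (cU v) = v)
    (hcL : ∀ l, cL (cL l) = l)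
    (hcUhat_iso : ∀ v, ‖cUhat v‖ = ‖v‖) (hcU_iso : ∀ v, ‖cU v‖ = ‖v‖)
    (hcL_iso : ∀ l, ‖cL l‖ = ‖l‖)
    (R : Uhat →L[ℂ] U) (T : U →L[ℂ] Lam) (X : Lam →L[ℂ] Lam)
    (hRreal : ∀ v, R (cUhat v) = cU (R v))
    (hTreal : ∀ v, T (cU v) = cL (T v))
    -- Assumption A1
    (hRinj : LinearMap.ker (R : Uhat →ₗ[ℂ] U) = ⊥)
    (hRclosed : IsClosed (Set.range R))
    -- Assumption A2
    (hX2 : X.comp X = ContinuousLinearMap.id ℂ Lam)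
    (hA2 : LinearMap.range (R : Uhat →ₗ[ℂ] U) = LinearMap.ker ((ContinuousLinearMap.id ℂ Lam - X).comp T : U →ₗ[ℂ] Lam))
    (A : U →L[ℂ] (U →L[ℂ] ℂ))
    -- `Â = R^⊤ A R` bijective with bounded inverse
    (Ahatinv : (Uhat →L[ℂ] ℂ) →L[ℂ] Uhat)
    (hAhat_left : ∀ uhat : Uhat, Ahatinv (trOp R (A (R uhat))) = uhat)
    (hAhat_right : ∀ g : Uhat →L[ℂ] ℂ, trOp R (A (R (Ahatinv g))) = g)
    (α : ℂ) (hα : α ≠ 0)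
    (M : Lam →L[ℂ] (Lam →L[ℂ] ℂ))
    -- Assumption A3: `M + X^⊤ M X` has a bounded inverse
    (Ninv : (Lam →L[ℂ] ℂ) →L[ℂ] Lam)
    (hNl : ∀ l : Lam, Ninv ((M + (trOp X).comp (M.comp X)) l) = l)
    (hNr : ∀ μ : Lam →L[ℂ] ℂ, (M + (trOp X).comp (M.comp X)) (Ninv μ) = μ)
    -- Assumption A5: `Ã = A + α T^⊤ M T` has a bounded inverse
    (Atinv : (U →L[ℂ] ℂ) →L[ℂ] U)
    (hAt_l : ∀ u : U, Atinv ((A + α • ((trOp T).comp (M.comp T))) u) = u)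
    (hAt_r : ∀ g : U →L[ℂ] ℂ, (A + α • ((trOp T).comp (M.comp T))) (Atinv g) = g)
    -- Assumption A6: `M` real, symmetric, positively bounded below, with inverse `Minv`
    (hMreal : IsRealForm cL M) (hMsym : IsSymForm M)
    (cM : ℝ) (hcM : 0 < cM)
    (hMlow : ∀ l : Lam, (M l (cL l)).im = 0 ∧ cM * ‖l‖ ^ 2 ≤ (M l (cL l)).re)
    (Minv : (Lam →L[ℂ] ℂ) →L[ℂ] Lam)
    (hMinv_l : ∀ l : Lam, Minv (M l) = l) (hMinv_r : ∀ μ : Lam →L[ℂ] ℂ, M (Minv μ) = μ)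
    -- surjectivity of the trace operator
    (hTsurj : LinearMap.range (T : U →ₗ[ℂ] Lam) = ⊤) :
    ∃ γ : ℝ, 0 < γ ∧
      (∀ lam : Lam →L[ℂ] ℂ,
        γ * Real.sqrt (sqMinv cL Minv lam) ≤
          Real.sqrt (sqMinv cL Minv (lam - trOp X (scatOpFull T X M Atinv α lam)))) ∧
      -- under A4, AXR and A7 the coercivity estimate holds with the same `γ`
      (((trOp X).comp (M.comp X) = M ∧ (∀ l, X (cL l) = cL (X l)) ∧ AssumptionA7 α cU A) →
        ∀ lam : Lam →L[ℂ] ℂ,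
          γ ^ 2 / 2 * sqMinv cL Minv lam ≤
            (lam (cL (Minv (lam - trOp X (scatOpFull T X M Atinv α lam))))).re) :=
  statement16_general cU cL R T X hTreal hX2 hA2 A Ahatinv hAhat_left hAhat_right α hα M Ninv hNl
    hNr Atinv hAt_l hAt_r hMreal hMsym cM hcM hMlow Minv hMinv_l hMinv_r hTsurj
end
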